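/- arXiv:2407.01900 — 8 statements merged into one kernel-verified Lean document; each statement's English description precedes it below -/
import Mathlib

section
/- Let κ₁ < κ₂ < ⋯ < κ_m be real numbers, let I = {i₁ < i₂ < ⋯ < i_n} ⊆ {1,…,m}, let k ∈ {1,…,n}, and let j ∈ {1,…,m} \ I with j > i_k. Set μ = #{p ∈ {1,…,n} : i_p > i_k} and ν = #{p ∈ {1,…,n} : i_p > j}. Then (−1)^{μ+ν} · ∏_{p ≠ k} (κ_{i_p} − κ_j)/(κ_{i_p} − κ_{i_k}) > 0; equivalently, the sign of the product ∏_{p ≠ k} (κ_{i_p} − κ_j)/(κ_{i_p} − κ_{i_k}) equals (−1)^{μ+ν}. -/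
open Finset

/-- Sign computation: for ordered parameters κ₁ < ⋯ < κ_m, pivot columns
i₁ < ⋯ < i_n, a row index k and a non-pivot column j > i_k,
the sign of ∏_{p ≠ k} (κ_{i_p} − κ_j)/(κ_{i_p} − κ_{i_k}) is (−1)^{μ+ν},
where μ = #{p : i_p > i_k} and ν = #{p : i_p > j}. -/
theorem sign_of_product_pivots (m n : ℕ) (κ : Fin m → ℝ) (hκ : StrictMono κ)
    (i : Fin n → Fin m) (hi : StrictMono i) (k : Fin n)
    (j : Fin m) (hj : j ∉ Set.range i) (hjk : i k < j) :
    (-1 : ℝ) ^ ((Finset.univ.filter (fun p : Fin n => i k < i p)).card +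
        (Finset.univ.filter (fun p : Fin n => j < i p)).card) *
      ∏ p ∈ Finset.univ.erase k, (κ (i p) - κ j) / (κ (i p) - κ (i k)) > 0 := by
  classical
  set A := Finset.univ.filter (fun p : Fin n => i k < i p) with hA
  set B := Finset.univ.filter (fun p : Fin n => j < i p) with hB
  set C := Finset.univ.filter (fun p : Fin n => i k < i p ∧ i p < j) with hC
  have hBA : B ⊆ A := by
    intro p hp
    simp only [hA, hB, Finset.mem_filter, Finset.mem_univ, true_and] at *
    exact lt_trans hjk hp
  have hCAB : C = A \ B := by
    ext p
    simp only [hA, hB, hC, Finset.mem_filter, Finset.mem_sdiff, Finset.mem_univ, true_and]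
    constructor
    · rintro ⟨h1, h2⟩; exact ⟨h1, not_lt.2 h2.le⟩
    · rintro ⟨h1, h2⟩
      refine ⟨h1, lt_of_le_of_ne (not_lt.1 h2) ?_⟩
      intro h; exact hj ⟨p, h⟩
  have hcard : A.card = C.card + B.card := by
    rw [hCAB, Finset.card_sdiff_of_subset hBA]
    have := Finset.card_le_card hBA
    omega
  have hsign : ((-1 : ℝ)) ^ (A.card + B.card) = (-1) ^ C.card := by
    rw [hcard, show C.card + B.card + B.card = C.card + 2 * B.card by ring,
      pow_add, pow_mul]
    norm_num
  have hkC : k ∉ C := by simp [hC]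
  have key : ∀ p ∈ Finset.univ.erase k,
      0 < (if p ∈ C then (-1 : ℝ) else 1) * ((κ (i p) - κ j) / (κ (i p) - κ (i k))) := by
    intro p hp
    have hpk : p ≠ k := Finset.ne_of_mem_erase hp
    have hipk : i p ≠ i k := fun h => hpk (hi.injective h)
    have hipj : i p ≠ j := fun h => hj ⟨p, h⟩
    rcases lt_or_gt_of_ne hipk with h1 | h1
    · have hpC : p ∉ C := by
        simp only [hC, Finset.mem_filter, Finset.mem_univ, true_and, not_and]
        intro h; exact absurd h (not_lt.2 h1.le)
      rw [if_neg hpC, one_mul]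
      have hn : κ (i p) - κ j < 0 := sub_neg.2 (hκ (h1.trans hjk))
      have hd : κ (i p) - κ (i k) < 0 := sub_neg.2 (hκ h1)
      exact div_pos_of_neg_of_neg hn hd
    · rcases lt_or_gt_of_ne hipj with h2 | h2
      · have hpC : p ∈ C := by
          simp only [hC, Finset.mem_filter, Finset.mem_univ, true_and]
          exact ⟨h1, h2⟩
        rw [if_pos hpC]
        have hn : κ (i p) - κ j < 0 := sub_neg.2 (hκ h2)
        have hd : 0 < κ (i p) - κ (i k) := sub_pos.2 (hκ h1)
        have := div_neg_of_neg_of_pos hn hd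
        nlinarith
      · have hpC : p ∉ C := by
          simp only [hC, Finset.mem_filter, Finset.mem_univ, true_and, not_and]
          intro _; exact not_lt.2 h2.le
        rw [if_neg hpC, one_mul]
        have hn : 0 < κ (i p) - κ j := sub_pos.2 (hκ h2)
        have hd : 0 < κ (i p) - κ (i k) := sub_pos.2 (hκ (hjk.trans h2))
        exact div_pos hn hd
  have hprod := Finset.prod_pos key
  rw [Finset.prod_mul_distrib] at hprod
  have hCsub : C ⊆ Finset.univ.erase k := by
    intro p hp
    exact Finset.mem_erase.2 ⟨fun h => hkC (h ▸ hp), Finset.mem_univ p⟩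
  have hite : (∏ p ∈ Finset.univ.erase k, (if p ∈ C then (-1 : ℝ) else 1))
      = (-1 : ℝ) ^ C.card := by
    rw [Finset.prod_ite_mem, Finset.inter_eq_right.2 hCsub, Finset.prod_const]
  rw [hite] at hprod
  rw [hsign]
  exact hprod
end

section
/- Let A be an n × m real matrix whose columns i₁ < i₂ < ⋯ < i_n (the pivot columns) are the standard basis vectors, i.e. column i_p of A equals e_p ∈ ℝⁿ for each p. Let k ∈ {1,…,n} and let j ∉ {i₁,…,i_n} be a column index with j > i_k. Let J be the n-element column set (I \ {i_k}) ∪ {j} listed in increasing order, where I = {i₁,…,i_n}. Then the n × n minor Δ_J(A) of A on the columns J equals (−1)^{μ−ν} · A_{k,j}, where μ = #{p : i_p > i_k} and ν = #{p : i_p > j}. -/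
open Finset

set_option maxHeartbeats 1000000

/-- For a matrix in reduced row echelon form (pivot columns are the standard
basis vectors), the maximal minor on the column set (I \ {i_k}) ∪ {j}
(with j a non-pivot column to the right of i_k) equals (−1)^{μ−ν}·A_{k,j}. -/
theorem minor_of_rref_pivot_exchange (n m : ℕ) (A : Matrix (Fin n) (Fin m) ℝ)
    (i : Fin n → Fin m) (hi : StrictMono i)
    (hpiv : ∀ p q : Fin n, A q (i p) = if q = p then 1 else 0)
    (k : Fin n) (j : Fin m) (hj : j ∉ Set.range i) (hjk : i k < j)
    (J : Finset (Fin m)) (hJ : J = insert j ((Finset.univ.image i).erase (i k)))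
    (hJcard : J.card = n) :
    (A.submatrix id (fun p : Fin n => (J.orderIsoOfFin hJcard p : Fin m))).det =
      (-1 : ℝ) ^ ((Finset.univ.filter (fun p : Fin n => i k < i p)).card -
          (Finset.univ.filter (fun p : Fin n => j < i p)).card) * A k j := by
  obtain ⟨n, rfl⟩ : ∃ n', n = n' + 1 := ⟨n - 1, by have := k.pos; omega⟩
  have hi' : ∀ p q : Fin (n+1), (p:ℕ) < (q:ℕ) → i p < i q := fun p q h => hi h
  have hk1 : (k:ℕ) < n + 1 := k.isLt
  -- t : the largest pivot index with i t < j
  have hTne : (univ.filter fun p : Fin (n+1) => i p < j).Nonempty :=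
    ⟨k, by simp [hjk]⟩
  set t := (univ.filter fun p : Fin (n+1) => i p < j).max' hTne with htdef
  have htj : i t < j := (mem_filter.1 ((univ.filter _).max'_mem hTne)).2
  have hkt : (k:ℕ) ≤ (t:ℕ) := le_max' _ k (by simp [hjk])
  have hgt : ∀ p : Fin (n+1), (t:ℕ) < (p:ℕ) → j < i p := by
    intro p hp
    rcases lt_trichotomy j (i p) with h | h | h
    · exact h
    · exact absurd ⟨p, h.symm⟩ hj
    · exact absurd (le_max' _ p (by simp [h])) (not_le.2 hp)
  have hle : ∀ p : Fin (n+1), (p:ℕ) ≤ (t:ℕ) → i p < j := fun p hp =>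
    lt_of_le_of_lt (hi.monotone hp) htj
  have ht1 : (t:ℕ) < n + 1 := t.isLt
  -- the two cardinalities
  have hμ : (univ.filter fun p : Fin (n+1) => i k < i p).card = n + 1 - 1 - (k:ℕ) := by
    have h1 : (univ.filter fun p : Fin (n+1) => i k < i p) = Ioi k := by
      ext p; simp [hi.lt_iff_lt]
    rw [h1, Fin.card_Ioi]
  have hν : (univ.filter fun p : Fin (n+1) => j < i p).card = n + 1 - 1 - (t:ℕ) := by
    have h1 : (univ.filter fun p : Fin (n+1) => j < i p) = Ioi t := by
      ext p
      simp only [mem_filter, mem_univ, true_and, mem_Ioi]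
      constructor
      · intro h
        by_contra hc
        exact absurd (hle p (Fin.le_def.1 (Fin.not_lt.1 hc))) (asymm h)
      · intro h; exact hgt p h
    rw [h1, Fin.card_Ioi]
  -- the increasing enumeration of J
  set f : Fin (n+1) → Fin m := fun l =>
    if h : (l:ℕ) < (t:ℕ) then
      (if (l:ℕ) < (k:ℕ) then i l else i ⟨(l:ℕ)+1, by omega⟩)
    else if (t:ℕ) < (l:ℕ) then i l else j
    with hf
  -- the values of f on each of the four regions
  have hfA : ∀ x : Fin (n+1), (x:ℕ) < (k:ℕ) → f x = i x := by
    intro x hx; simp only [hf]; rw [dif_pos (by omega), if_pos hx]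
  have hfB : ∀ x : Fin (n+1), ∀ hx1 : (k:ℕ) ≤ (x:ℕ), ∀ hx2 : (x:ℕ) < (t:ℕ),
      f x = i ⟨(x:ℕ)+1, by omega⟩ := by
    intro x hx1 hx2; simp only [hf]; rw [dif_pos hx2, if_neg (by omega)]
  have hfC : f t = j := by
    simp only [hf]; rw [dif_neg (by omega), if_neg (by omega)]
  have hfD : ∀ x : Fin (n+1), (t:ℕ) < (x:ℕ) → f x = i x := by
    intro x hx; simp only [hf]; rw [dif_neg (by omega), if_pos hx]
  have hfmono : StrictMono f := by
    intro a b hab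
    have hab' : (a:ℕ) < (b:ℕ) := hab
    have ha := a.isLt
    have hb := b.isLt
    by_cases ha1 : (a:ℕ) < (k:ℕ)
    · rw [hfA a ha1]
      by_cases hb1 : (b:ℕ) < (k:ℕ)
      · rw [hfA b hb1]; exact hi' _ _ hab'
      · by_cases hb2 : (b:ℕ) < (t:ℕ)
        · rw [hfB b (by omega) hb2]
          exact hi' _ _ (show (a:ℕ) < (b:ℕ)+1 by omega)
        · by_cases hb3 : (t:ℕ) < (b:ℕ)
          · rw [hfD b hb3]; exact hi' _ _ hab'
          · have hbt : b = t := Fin.ext (by omega)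
            rw [hbt, hfC]; exact hle a (by omega)
    · by_cases ha2 : (a:ℕ) < (t:ℕ)
      · rw [hfB a (by omega) ha2]
        by_cases hb2 : (b:ℕ) < (t:ℕ)
        · rw [hfB b (by omega) hb2]
          exact hi' _ _ (show (a:ℕ)+1 < (b:ℕ)+1 by omega)
        · by_cases hb3 : (t:ℕ) < (b:ℕ)
          · rw [hfD b hb3]
            exact hi' _ _ (show (a:ℕ)+1 < (b:ℕ) by omega)
          · have hbt : b = t := Fin.ext (by omega)
            rw [hbt, hfC]
            exact hle _ (show (a:ℕ)+1 ≤ (t:ℕ) by omega)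
      · by_cases ha3 : (t:ℕ) < (a:ℕ)
        · rw [hfD a ha3, hfD b (by omega)]
          exact hi' _ _ hab'
        · have hat : a = t := Fin.ext (by omega)
          rw [hat, hfC, hfD b (by omega)]
          exact hgt b (by omega)
  have hfJ : ∀ l, f l ∈ J := by
    have hmemI : ∀ p : Fin (n+1), p ≠ k →
        i p ∈ insert j ((Finset.univ.image i).erase (i k)) := fun p hp =>
      mem_insert_of_mem (mem_erase.2 ⟨fun h => hp (hi.injective h),
        mem_image_of_mem i (mem_univ p)⟩)
    intro l
    rw [hJ]
    have hl := l.isLt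
    by_cases h1 : (l:ℕ) < (k:ℕ)
    · rw [hfA l h1]
      exact hmemI l (by intro h; rw [h] at h1; omega)
    · by_cases h2 : (l:ℕ) < (t:ℕ)
      · rw [hfB l (by omega) h2]
        exact hmemI _ (by intro h; have := congrArg Fin.val h; simp at this; omega)
      · by_cases h3 : (t:ℕ) < (l:ℕ)
        · rw [hfD l h3]
          exact hmemI l (by intro h; rw [h] at h3; omega)
        · have hlt : l = t := Fin.ext (by omega)
          rw [hlt, hfC]
          exact mem_insert_self _ _
  have hfeq : (fun p : Fin (n+1) => (J.orderIsoOfFin hJcard p : Fin m)) = f := by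
    have h := Finset.orderEmbOfFin_unique hJcard hfJ hfmono
    funext p
    rw [Finset.coe_orderIsoOfFin_apply, ← h]
  rw [hfeq]
  -- value of Fin subtraction
  have hsub : ∀ x : Fin (n+1), ((x - k : Fin (n+1)) : ℕ) =
      if (k:ℕ) ≤ (x:ℕ) then (x:ℕ) - (k:ℕ) else (x:ℕ) + (n+1) - (k:ℕ) := by
    intro x
    have hx := x.isLt
    rw [Fin.sub_def]
    rcases le_or_gt (k:ℕ) (x:ℕ) with h | h
    · rw [if_pos h]
      show ((n + 1) - (k:ℕ) + (x:ℕ)) % (n+1) = (x:ℕ) - (k:ℕ)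
      have e : (n + 1) - (k:ℕ) + (x:ℕ) = ((x:ℕ) - (k:ℕ)) + (n+1) := by omega
      rw [e, Nat.add_mod_right, Nat.mod_eq_of_lt (by omega)]
    · rw [if_neg (not_le.2 h)]
      show ((n + 1) - (k:ℕ) + (x:ℕ)) % (n+1) = (x:ℕ) + (n+1) - (k:ℕ)
      have e : (n + 1) - (k:ℕ) + (x:ℕ) = (x:ℕ) + (n+1) - (k:ℕ) := by omega
      rw [e, Nat.mod_eq_of_lt (by omega)]
  -- the permutation
  set d : Fin (n+1) := ⟨(t:ℕ) - (k:ℕ), by omega⟩ with hd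
  set g : Equiv.Perm (Fin (n+1)) := Equiv.addLeft k with hg
  set π : Equiv.Perm (Fin (n+1)) := g * d.cycleRange * g⁻¹ with hπ
  have hπ_apply : ∀ x : Fin (n+1), π x = k + d.cycleRange (x - k) := by
    intro x
    have hinv : g⁻¹ x = x - k := by
      rw [hg, Equiv.Perm.inv_def, Equiv.addLeft_symm]
      show -k + x = x - k
      rw [neg_add_eq_sub]
    simp only [hπ, Equiv.Perm.mul_apply, hinv, hg]
    rw [← hg, hinv]
    rfl
  have hπ1 : ∀ x : Fin (n+1), (x:ℕ) < (k:ℕ) → π x = x := by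
    intro x hx
    have hxlt := x.isLt
    rw [hπ_apply, Fin.cycleRange_of_gt (by
      rw [Fin.lt_def, hsub x, if_neg (by omega)]
      show (t:ℕ) - (k:ℕ) < (x:ℕ) + (n+1) - (k:ℕ)
      omega)]
    abel
  have hπ2 : ∀ x : Fin (n+1), ∀ hx1 : (k:ℕ) ≤ (x:ℕ), ∀ hx2 : (x:ℕ) < (t:ℕ),
      π x = ⟨(x:ℕ)+1, by omega⟩ := by
    intro x hx1 hx2
    rw [hπ_apply, Fin.cycleRange_of_lt (by
      rw [Fin.lt_def, hsub x, if_pos hx1]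
      show (x:ℕ) - (k:ℕ) < (t:ℕ) - (k:ℕ)
      omega)]
    have e1 : k + ((x - k) + 1) = x + 1 := by abel
    have e2 : (x + 1 : Fin (n+1)) = ⟨(x:ℕ)+1, by omega⟩ :=
      Fin.ext (Fin.val_add_one_of_lt (by rw [Fin.lt_def, Fin.val_last]; omega))
    exact e1.trans e2
  have hπ3 : π t = k := by
    rw [hπ_apply]
    have e : (t : Fin (n+1)) - k = d := by
      apply Fin.ext
      rw [hsub t, if_pos hkt]
    rw [e, Fin.cycleRange_self, add_zero]
  have hπ4 : ∀ x : Fin (n+1), (t:ℕ) < (x:ℕ) → π x = x := by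
    intro x hx
    rw [hπ_apply, Fin.cycleRange_of_gt (by
      rw [Fin.lt_def, hsub x, if_pos (by omega)]
      show (t:ℕ) - (k:ℕ) < (x:ℕ) - (k:ℕ)
      omega)]
    abel
  -- identify the minor with a column permutation of C
  set C := Matrix.updateCol (1 : Matrix (Fin (n+1)) (Fin (n+1)) ℝ) k
    (fun q => A q j) with hC
  have hBC : A.submatrix id f = C.submatrix id π := by
    ext q l
    have hl := l.isLt
    simp only [Matrix.submatrix_apply, id_eq, hC, Matrix.updateCol_apply]
    by_cases h1 : (l:ℕ) < (k:ℕ)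
    · have hne : ¬(π l = k) := by
        rw [hπ1 l h1]
        exact fun h => by rw [h] at h1; omega
      rw [if_neg hne, hπ1 l h1, hfA l h1, hpiv, Matrix.one_apply]
    · by_cases h2 : (l:ℕ) < (t:ℕ)
      · have hπl := hπ2 l (by omega) h2
        have hne : ¬(π l = k) := by
          rw [hπl]
          intro h
          have := congrArg Fin.val h
          simp at this
          omega
        rw [if_neg hne, hπl, hfB l (by omega) h2, hpiv, Matrix.one_apply]
      · by_cases h3 : (t:ℕ) < (l:ℕ)
        · have hne : ¬(π l = k) := by
            rw [hπ4 l h3]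
            exact fun h => by rw [h] at h3; omega
          rw [if_neg hne, hπ4 l h3, hfD l h3, hpiv, Matrix.one_apply]
        · have hlt : l = t := Fin.ext (by omega)
          rw [hlt, hπ3, if_pos rfl, hfC]
  rw [hBC, Matrix.det_permute']
  have hCdet : C.det = A k j := by
    have h1 : Matrix.cramer (1 : Matrix (Fin (n+1)) (Fin (n+1)) ℝ)
        (fun q => A q j) k = C.det := by rw [Matrix.cramer_apply]
    rw [← h1, Matrix.cramer_one, Module.End.one_apply]
  rw [hCdet]
  have hsign : Equiv.Perm.sign π = (-1 : ℤˣ) ^ ((t:ℕ) - (k:ℕ)) := by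
    rw [hπ]
    simp only [Equiv.Perm.sign_mul, Equiv.Perm.sign_inv, Fin.sign_cycleRange]
    rw [mul_right_comm, Int.units_mul_self, one_mul]
  rw [hμ, hν, hsign]
  have hexp : (n + 1 - 1 - (k:ℕ)) - (n + 1 - 1 - (t:ℕ)) = (t:ℕ) - (k:ℕ) := by omega
  rw [hexp]
  push_cast
  ring
end

section
/- Let κ₁ < κ₂ < ⋯ < κ_m be real numbers and let A = (a_{k,j}) be an n × m real matrix of rank n in reduced row echelon form with pivot columns i₁ < i₂ < ⋯ < i_n (so column i_p of A equals the standard basis vector e_p, and a_{k,j} = 0 whenever j < i_k). Assume every n × n minor of A is nonnegative. Then for every row k and every non-pivot column j with a_{k,j} ≠ 0, one has a_{k,j} · ∏_{p ≠ k} (κ_{i_p} − κ_j)/(κ_{i_p} − κ_{i_k}) > 0; in other words the sign of a_{k,j} equals the sign of ∏_{p ≠ k} (κ_{i_p} − κ_{i_k})/(κ_{i_p} − κ_j). -/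
open Finset

set_option maxHeartbeats 1600000

private lemma aux_neg_one_pow_prod_pos {α : Type*} [DecidableEq α] (S : Finset α) (f : α → ℝ)
    (h : ∀ p ∈ S, f p < 0) : 0 < (-1 : ℝ) ^ S.card * ∏ p ∈ S, f p := by
  induction S using Finset.induction_on with
  | empty => simp
  | @insert a s ha ih =>
      rw [Finset.prod_insert ha, Finset.card_insert_of_notMem ha, pow_succ]
      have h1 := h a (Finset.mem_insert_self _ _)
      have h2 := ih (fun p hp => h p (Finset.mem_insert_of_mem hp))
      nlinarith

/-- Sign lemma for totally nonnegative matrices in reduced row echelon form: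
for ordered parameters κ₁ < ⋯ < κ_m, if all maximal minors of A are
nonnegative, then every nonzero non-pivot entry a_{k,j} satisfies
a_{k,j} · ∏_{p ≠ k} (κ_{i_p} − κ_j)/(κ_{i_p} − κ_{i_k}) > 0. -/
theorem sign_of_entries_tnn_rref (n m : ℕ) (κ : Fin m → ℝ) (hκ : StrictMono κ)
    (A : Matrix (Fin n) (Fin m) ℝ)
    (i : Fin n → Fin m) (hi : StrictMono i)
    (hpiv : ∀ p q : Fin n, A q (i p) = if q = p then 1 else 0)
    (hrref : ∀ (k : Fin n) (j : Fin m), j < i k → A k j = 0)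
    (hminor : ∀ (J : Finset (Fin m)) (hJ : J.card = n),
      0 ≤ (A.submatrix id (fun p : Fin n => (J.orderIsoOfFin hJ p : Fin m))).det)
    (k : Fin n) (j : Fin m) (hj : j ∉ Set.range i) (hA : A k j ≠ 0) :
    0 < A k j * ∏ p ∈ Finset.univ.erase k, (κ (i p) - κ j) / (κ (i p) - κ (i k)) := by
  classical
  obtain ⟨n', rfl⟩ : ∃ n', n = n' + 1 := ⟨n - 1, by have := k.pos; omega⟩
  have hinj := hi.injective
  have hne : ∀ p, i p ≠ j := fun p h => hj ⟨p, h⟩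
  have hikj : i k < j := by
    rcases lt_trichotomy j (i k) with h | h | h
    · exact absurd (hrref k j h) hA
    · exact absurd h.symm (hne k)
    · exact h
  set S : Finset (Fin (n' + 1)) := univ.filter (fun p => k < p ∧ i p < j) with hSdef
  set N : ℕ := S.card with hNdef
  have hkN : k.val + N < n' + 1 := by
    have hsub : S ⊆ Finset.Ioi k := by
      intro q hq
      rw [hSdef, mem_filter] at hq
      exact Finset.mem_Ioi.mpr hq.2.1
    have hc := Finset.card_le_card hsub
    rw [Fin.card_Ioi] at hc
    have := k.isLt
    omega
  have hSeg : ∀ p : Fin (n' + 1), k < p → (i p < j ↔ p.val ≤ k.val + N) := by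
    intro p hkp
    have hkpv : k.val < p.val := hkp
    constructor
    · intro hpj
      have hsub : Finset.Ioc k p ⊆ S := by
        intro q hq
        rw [Finset.mem_Ioc] at hq
        exact mem_filter.mpr ⟨mem_univ _, hq.1, lt_of_le_of_lt (hi.monotone hq.2) hpj⟩
      have hc := Finset.card_le_card hsub
      rw [Fin.card_Ioc] at hc
      omega
    · intro hple
      by_contra hpj
      have hjp : j < i p := lt_of_le_of_ne (not_lt.mp hpj) (hne p).symm
      have hsub : S ⊆ Finset.Ioo k p := by
        intro q hq
        rw [hSdef, mem_filter] at hq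
        exact Finset.mem_Ioo.mpr ⟨hq.2.1, hi.lt_iff_lt.mp (hq.2.2.trans hjp)⟩
      have hc := Finset.card_le_card hsub
      rw [Fin.card_Ioo] at hc
      omega
  have hmid : ∀ p : Fin (n' + 1), k.val < p.val → p.val ≤ k.val + N → i p < j :=
    fun p h1 h2 => (hSeg p h1).mpr h2
  have hhigh : ∀ p : Fin (n' + 1), k.val + N < p.val → j < i p := by
    intro p h
    have hkp : k < p := show k.val < p.val by omega
    have : ¬ i p < j := fun hc => by have := (hSeg p hkp).mp hc; omega
    exact lt_of_le_of_ne (not_lt.mp this) (Ne.symm (hne p))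
  have hlti : ∀ a b : Fin (n' + 1), a.val < b.val → i a < i b := fun a b h => hi h
  -- the column set J
  set J : Finset (Fin m) := insert j ((univ.image i).erase (i k)) with hJdef
  have hjimage : j ∉ univ.image i := by
    simp only [mem_image]
    rintro ⟨p, -, hp⟩
    exact hne p hp
  have hJcard : J.card = n' + 1 := by
    rw [hJdef, card_insert_of_notMem (fun h => hjimage (erase_subset _ _ h)),
        card_erase_of_mem (mem_image_of_mem i (mem_univ k)),
        card_image_of_injective _ hinj, card_univ, Fintype.card_fin]
    omega
  -- the explicit order embedding f
  set f : Fin (n' + 1) → Fin m := fun c =>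
    if c.val < k.val then i c
    else if h : c.val < k.val + N then i ⟨c.val + 1, by omega⟩
    else if c.val = k.val + N then j
    else i c
    with hfdef
  have hf1 : ∀ c : Fin (n' + 1), c.val < k.val → f c = i c := by
    intro c h; simp only [hfdef]; rw [if_pos h]
  have hf2 : ∀ (c : Fin (n' + 1)) (h2 : c.val < k.val + N), k.val ≤ c.val →
      f c = i ⟨c.val + 1, by omega⟩ := by
    intro c h2 h1; simp only [hfdef]; rw [if_neg (by omega), dif_pos h2]
  have hf3 : ∀ c : Fin (n' + 1), c.val = k.val + N → f c = j := by
    intro c h; simp only [hfdef]; rw [if_neg (by omega), dif_neg (by omega), if_pos h]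
  have hf4 : ∀ c : Fin (n' + 1), k.val + N < c.val → f c = i c := by
    intro c h; simp only [hfdef]; rw [if_neg (by omega), dif_neg (by omega), if_neg (by omega)]
  have himem : ∀ c : Fin (n' + 1), c.val ≠ k.val → i c ∈ J := by
    intro c hck
    refine mem_insert_of_mem (mem_erase.mpr ⟨?_, mem_image_of_mem i (mem_univ c)⟩)
    intro he
    exact hck (congrArg Fin.val (hinj he))
  have hfmem : ∀ c, f c ∈ J := by
    intro c
    rcases lt_or_ge c.val k.val with h | h
    · rw [hf1 c h]; exact himem c (by omega)
    rcases lt_or_ge c.val (k.val + N) with h2 | h2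
    · rw [hf2 c h2 h]; exact himem _ (by simp; omega)
    rcases eq_or_lt_of_le h2 with h3 | h3
    · rw [hf3 c h3.symm]; exact mem_insert_self _ _
    · rw [hf4 c h3]; exact himem c (by omega)
  have hfmono : StrictMono f := by
    intro c d hcd
    have hcdv : c.val < d.val := hcd
    rcases lt_or_ge c.val k.val with h | h
    · rw [hf1 c h]
      rcases lt_or_ge d.val k.val with g | g
      · rw [hf1 d g]; exact hlti _ _ hcdv
      rcases lt_or_ge d.val (k.val + N) with g2 | g2
      · rw [hf2 d g2 g]; exact hlti _ _ (by simp; omega)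
      rcases eq_or_lt_of_le g2 with g3 | g3
      · rw [hf3 d g3.symm]; exact lt_trans (hlti c k h) hikj
      · rw [hf4 d g3]; exact hlti _ _ hcdv
    rcases lt_or_ge c.val (k.val + N) with h2 | h2
    · rw [hf2 c h2 h]
      rcases lt_or_ge d.val (k.val + N) with g2 | g2
      · rw [hf2 d g2 (by omega)]; exact hlti _ _ (by simp; omega)
      rcases eq_or_lt_of_le g2 with g3 | g3
      · rw [hf3 d g3.symm]; exact hmid _ (by simp; omega) (by simp; omega)
      · rw [hf4 d g3]; exact hlti _ _ (by simp; omega)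
    rcases eq_or_lt_of_le h2 with h3 | h3
    · rw [hf3 c h3.symm]
      have g3 : k.val + N < d.val := by omega
      rw [hf4 d g3]
      exact hhigh d g3
    · rw [hf4 c h3, hf4 d (by omega)]; exact hlti _ _ hcdv
  have hfeq : (fun p : Fin (n' + 1) => ((J.orderIsoOfFin hJcard) p : Fin m)) = f := by
    funext p
    rw [Finset.coe_orderIsoOfFin_apply]
    exact (congrFun (Finset.orderEmbOfFin_unique hJcard hfmem hfmono) p).symm
  -- the permutation
  set Ncap : Fin (n' + 1) := ⟨N, by omega⟩ with hNcapdef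
  set π₀ : Equiv.Perm (Fin (n' + 1)) :=
    Equiv.addRight k * Ncap.cycleRange * (Equiv.addRight k)⁻¹ with hπdef
  have hπval : ∀ x : Fin (n' + 1),
      (π₀ x).val = if x.val < k.val then x.val
        else if x.val < k.val + N then x.val + 1
        else if x.val = k.val + N then k.val
        else x.val := by
    intro x
    have hx := x.isLt
    have hk := k.isLt
    have hπapp : π₀ x = Ncap.cycleRange (x - k) + k := by
      have h1 : (Equiv.addRight k)⁻¹ x = x - k := by simp [sub_eq_add_neg]
      simp only [hπdef, Equiv.Perm.mul_apply, h1, Equiv.coe_addRight]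
    have hsubval : (x - k).val = (n' + 1 - k.val + x.val) % (n' + 1) := by
      rw [Fin.sub_def]
    rcases lt_or_ge x.val k.val with h | h
    · -- x < k : fixed
      have hv : (x - k).val = n' + 1 - k.val + x.val := by
        rw [hsubval, Nat.mod_eq_of_lt (by omega)]
      have hNv : Ncap.val = N := rfl
      have hgt : Ncap < x - k := show Ncap.val < (x - k).val by rw [hv, hNv]; omega
      rw [hπapp, Fin.cycleRange_of_gt hgt]
      have : ((x - k) + k).val = x.val := by
        rw [Fin.val_add, hv]
        have : n' + 1 - k.val + x.val + k.val = x.val + (n' + 1) := by omega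
        rw [this, Nat.add_mod_right, Nat.mod_eq_of_lt hx]
      rw [this, if_pos h]
    · have hv : (x - k).val = x.val - k.val := by
        rw [hsubval]
        have : n' + 1 - k.val + x.val = (x.val - k.val) + (n' + 1) := by omega
        rw [this, Nat.add_mod_right, Nat.mod_eq_of_lt (by omega)]
      rcases lt_or_ge x.val (k.val + N) with h2 | h2
      · have hNv : Ncap.val = N := rfl
        have hlt : x - k < Ncap := show (x - k).val < Ncap.val by rw [hv, hNv]; omega
        rw [hπapp, Fin.cycleRange_of_lt hlt]
        have hone : ((x - k) + 1).val = x.val - k.val + 1 := by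
          rw [Fin.val_add, hv, Fin.val_one', Nat.mod_eq_of_lt (show 1 < n' + 1 by omega),
            Nat.mod_eq_of_lt (by omega)]
        have : ((x - k) + 1 + k).val = x.val + 1 := by
          rw [Fin.val_add, hone, Nat.mod_eq_of_lt (by omega)]
          omega
        rw [this, if_neg (by omega), if_pos h2]
      rcases eq_or_lt_of_le h2 with h3 | h3
      · have hxk : x - k = Ncap := by
          apply Fin.ext; rw [hv]; simp [hNcapdef]; omega
        rw [hπapp, hxk, Fin.cycleRange_self]
        have : ((0 : Fin (n' + 1)) + k).val = k.val := by
          rw [Fin.val_add]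
          simp [Nat.mod_eq_of_lt hk]
        rw [this, if_neg (by omega), if_neg (by omega), if_pos h3.symm]
      · have hNv : Ncap.val = N := rfl
        have hgt : Ncap < x - k := show Ncap.val < (x - k).val by rw [hv, hNv]; omega
        rw [hπapp, Fin.cycleRange_of_gt hgt]
        have : ((x - k) + k).val = x.val := by
          rw [Fin.val_add, hv]
          rw [Nat.mod_eq_of_lt (by omega)]
          omega
        rw [this, if_neg (by omega), if_neg (by omega), if_neg (by omega)]
  set c₀ : Fin (n' + 1) := ⟨k.val + N, hkN⟩ with hc0def
  have hπc₀ : π₀ c₀ = k := by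
    apply Fin.ext
    rw [hπval]
    simp [hc0def]
  have hfπ : ∀ c : Fin (n' + 1), c ≠ c₀ → f c = i (π₀ c) := by
    intro c hc
    have hcv : c.val ≠ k.val + N := fun h => hc (Fin.ext h)
    rcases lt_or_ge c.val k.val with h | h
    · rw [hf1 c h]
      congr 1
      apply Fin.ext
      rw [hπval, if_pos h]
    rcases lt_or_ge c.val (k.val + N) with h2 | h2
    · rw [hf2 c h2 h]
      congr 1
      apply Fin.ext
      rw [hπval, if_neg (by omega), if_pos h2]
    · have h3 : k.val + N < c.val := by omega
      rw [hf4 c h3]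
      congr 1
      apply Fin.ext
      rw [hπval, if_neg (by omega), if_neg (by omega), if_neg (by omega)]
  have hAf : ∀ (c : Fin (n' + 1)), c ≠ c₀ → ∀ q, A q (f c) = if q = π₀ c then 1 else 0 := by
    intro c hc q
    rw [hfπ c hc, hpiv]
  -- determinant computation
  have hdet : (A.submatrix id f).det = (-1 : ℝ) ^ N * A k j := by
    rw [Matrix.det_apply]
    rw [Finset.sum_eq_single π₀]
    · have hprod : ∏ c, (A.submatrix id f) (π₀ c) c = A k j := by
        rw [Finset.prod_eq_single c₀]
        · rw [Matrix.submatrix_apply, id_eq, hf3 c₀ rfl, hπc₀]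
        · intro b _ hb
          rw [Matrix.submatrix_apply, id_eq, hAf b hb, if_pos rfl]
        · intro h
          exact absurd (mem_univ c₀) h
      rw [hprod]
      have hsign : Equiv.Perm.sign π₀ = (-1) ^ N := by
        rw [hπdef]
        rw [map_mul, map_mul, map_inv, Fin.sign_cycleRange]
        have h1 : (Ncap : ℕ) = N := rfl
        rw [h1, mul_comm (Equiv.Perm.sign (Equiv.addRight k)) ((-1) ^ N), mul_inv_cancel_right]
      rw [hsign]
      simp [Units.smul_def]
    · intro π _ hπne
      have hex : ∃ c, c ≠ c₀ ∧ π c ≠ π₀ c := by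
        by_contra hcon
        push_neg at hcon
        apply hπne
        apply Equiv.ext
        intro c
        by_cases hc : c = c₀
        · subst hc
          by_contra hv
          set c' := π₀.symm (π c₀) with hc'def
          have hc'1 : π₀ c' = π c₀ := π₀.apply_symm_apply _
          have hc'ne : c' ≠ c₀ := fun h => hv (by rw [← hc'1, h])
          have := hcon c' hc'ne
          exact hc'ne (π.injective (this.trans hc'1))
        · exact hcon c hc
      obtain ⟨c, hc, hne'⟩ := hex
      rw [Finset.prod_eq_zero (mem_univ c), smul_zero]
      rw [Matrix.submatrix_apply, id_eq, hAf c hc, if_neg hne']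
    · intro h
      exact absurd (mem_univ π₀) h
  have hm0 := hminor J hJcard
  rw [hfeq, hdet] at hm0
  have hne0 : (-1 : ℝ) ^ N * A k j ≠ 0 := by
    simp [hA]
  have hpos1 : 0 < (-1 : ℝ) ^ N * A k j := lt_of_le_of_ne hm0 (Ne.symm hne0)
  -- sign of the product
  set g : Fin (n' + 1) → ℝ := fun p => (κ (i p) - κ j) / (κ (i p) - κ (i k)) with hgdef
  have hSsub : S ⊆ univ.erase k := by
    intro p hp
    rw [hSdef, mem_filter] at hp
    exact mem_erase.mpr ⟨hp.2.1.ne', mem_univ p⟩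
  have hSneg : ∀ p ∈ S, g p < 0 := by
    intro p hp
    rw [hSdef, mem_filter] at hp
    exact div_neg_of_neg_of_pos (sub_neg.mpr (hκ hp.2.2)) (sub_pos.mpr (hκ (hi hp.2.1)))
  have hTpos : ∀ p ∈ univ.erase k \ S, 0 < g p := by
    intro p hp
    rw [mem_sdiff, mem_erase] at hp
    obtain ⟨⟨hpk, -⟩, hpS⟩ := hp
    rcases lt_or_gt_of_ne hpk with hlt | hgt
    · have h1 : i p < i k := hi hlt
      have hnum : κ (i p) - κ j < 0 := sub_neg.mpr (hκ (h1.trans hikj))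
      have hden : κ (i p) - κ (i k) < 0 := sub_neg.mpr (hκ h1)
      exact div_pos_of_neg_of_neg hnum hden
    · have hnpj : ¬ i p < j := by
        intro hc
        exact hpS (by rw [hSdef, mem_filter]; exact ⟨mem_univ _, hgt, hc⟩)
      have hjp : j < i p := lt_of_le_of_ne (not_lt.mp hnpj) (Ne.symm (hne p))
      exact div_pos (sub_pos.mpr (hκ hjp)) (sub_pos.mpr (hκ (hi hgt)))
  have hpos2 : 0 < (-1 : ℝ) ^ N * ∏ p ∈ S, g p := aux_neg_one_pow_prod_pos S g hSneg
  have hpos3 : 0 < ∏ p ∈ univ.erase k \ S, g p := Finset.prod_pos hTpos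
  have hsq : (-1 : ℝ) ^ N * (-1) ^ N = 1 := by
    rw [← pow_add]
    exact Even.neg_one_pow ⟨N, rfl⟩
  have hAS : 0 < A k j * ∏ p ∈ S, g p := by
    have := mul_pos hpos1 hpos2
    rwa [mul_mul_mul_comm, hsq, one_mul] at this
  have hsplit : ∏ p ∈ univ.erase k, g p =
      (∏ p ∈ univ.erase k \ S, g p) * ∏ p ∈ S, g p := (Finset.prod_sdiff hSsub).symm
  calc 0 < (A k j * ∏ p ∈ S, g p) * ∏ p ∈ univ.erase k \ S, g p := mul_pos hAS hpos3
    _ = A k j * ∏ p ∈ univ.erase k, g p := by rw [hsplit]; ring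
end

section
/- Let A be an n₁ × m₁ real matrix and B an n₂ × m₂ real matrix, and let {1,…,m₁+m₂} = S_A ⊔ S_B be a partition into disjoint subsets with |S_A| = m₁ and |S_B| = m₂, with order-preserving bijections φ_A : {1,…,m₁} → S_A and φ_B : {1,…,m₂} → S_B. Let C be the (n₁+n₂) × (m₁+m₂) matrix defined by C_{i, φ_A(j)} = A_{i,j} for 1 ≤ i ≤ n₁, C_{n₁+i, φ_B(j)} = B_{i,j} for 1 ≤ i ≤ n₂, and C = 0 in all other entries. Then for every (n₁+n₂)-element column set S ⊆ {1,…,m₁+m₂}: (i) if |S ∩ S_A| ≠ n₁ then Δ_S(C) = 0; (ii) if |S ∩ S_A| = n₁, then Δ_S(C) = ε · Δ_I(A) · Δ_J(B), where I = φ_A⁻¹(S ∩ S_A), J = φ_B⁻¹(S ∩ S_B), and ε ∈ {+1, −1} is the sign of the permutation sorting the columns of S_A-type and S_B-type within S. In particular, the set of nonzero maximal minors of C is {± Δ_I(A) Δ_J(B) : Δ_I(A) ≠ 0, Δ_J(B) ≠ 0}. -/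
open Finset Equiv Equiv.Perm

theorem my_sign_eq_signAux {n : ℕ} (f : Equiv.Perm (Fin n)) :
    Equiv.Perm.sign f = Equiv.Perm.signAux f := by
  refine Equiv.Perm.swap_induction_on f (by simp) ?_
  intro f x y hxy ih
  rw [Equiv.Perm.signAux_mul, Equiv.Perm.sign_mul, ih, Equiv.Perm.sign_swap hxy,
    Equiv.Perm.signAux_swap hxy]

theorem my_sign_eq_pow {n : ℕ} (f : Equiv.Perm (Fin n)) :
    Equiv.Perm.sign f =
      (-1 : ℤˣ) ^ ((Equiv.Perm.finPairsLT n).filter (fun x => f x.1 ≤ f x.2)).card := by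
  rw [my_sign_eq_signAux, Equiv.Perm.signAux, Finset.prod_ite, Finset.prod_const,
    Finset.prod_const_one, mul_one]

theorem card_lt_filter (n₁ n₂ : ℕ) :
    ((univ : Finset (Fin (n₁ + n₂))).filter (fun r => r.val < n₁)).card = n₁ := by
  have h : (univ : Finset (Fin n₁)).card
      = ((univ : Finset (Fin (n₁ + n₂))).filter (fun r => r.val < n₁)).card := by
    refine Finset.card_bij (fun a _ => Fin.castAdd n₂ a) ?_ ?_ ?_
    · intro a _
      simp only [mem_filter, mem_univ, true_and, Fin.coe_castAdd]
      exact a.2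
    · intro a _ b _ h
      simpa [Fin.ext_iff] using h
    · intro r hr
      simp only [mem_filter] at hr
      exact ⟨⟨(r : ℕ), hr.2⟩, mem_univ _, by simp [Fin.ext_iff]⟩
  simpa using h.symm

theorem card_ge_filter (n₁ n₂ : ℕ) :
    ((univ : Finset (Fin (n₁ + n₂))).filter (fun r => ¬ r.val < n₁)).card = n₂ := by
  have h := Finset.card_filter_add_card_filter_not
    (s := (univ : Finset (Fin (n₁ + n₂)))) (p := fun r => r.val < n₁)
  rw [card_lt_filter] at h
  simp only [Finset.card_univ, Fintype.card_fin] at h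
  omega


open Finset

/-- Maximal minors of a κ-direct sum: the minor of the interleaved direct sum
C of A and B on a column set S vanishes unless S picks exactly n₁ columns of
A-type, in which case it is (up to the explicit sorting sign) the product of
the corresponding maximal minors of A and B. -/
theorem minors_of_kappa_direct_sum (n₁ n₂ m₁ m₂ : ℕ)
    (A : Matrix (Fin n₁) (Fin m₁) ℝ) (B : Matrix (Fin n₂) (Fin m₂) ℝ)
    (φA : Fin m₁ → Fin (m₁ + m₂)) (φB : Fin m₂ → Fin (m₁ + m₂))
    (hφA : StrictMono φA) (hφB : StrictMono φB)
    (hpart : ∀ x : Fin (m₁ + m₂), (∃ j, φA j = x) ↔ ¬ (∃ j, φB j = x))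
    (C : Matrix (Fin (n₁ + n₂)) (Fin (m₁ + m₂)) ℝ)
    (hCA : ∀ (i : Fin n₁) (j : Fin m₁), C (Fin.castAdd n₂ i) (φA j) = A i j)
    (hCB : ∀ (i : Fin n₂) (j : Fin m₂), C (Fin.natAdd n₁ i) (φB j) = B i j)
    (hCA0 : ∀ (i : Fin n₁) (j : Fin m₂), C (Fin.castAdd n₂ i) (φB j) = 0)
    (hCB0 : ∀ (i : Fin n₂) (j : Fin m₁), C (Fin.natAdd n₁ i) (φA j) = 0)
    (S : Finset (Fin (m₁ + m₂))) (hS : S.card = n₁ + n₂) :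
    ((S.filter (fun x => ∃ j, φA j = x)).card ≠ n₁ →
      (C.submatrix id (fun p : Fin (n₁ + n₂) =>
        (S.orderIsoOfFin hS p : Fin (m₁ + m₂)))).det = 0) ∧
    (∀ (I : Finset (Fin m₁)) (J : Finset (Fin m₂))
        (hI : I.card = n₁) (hJ : J.card = n₂),
      S = I.image φA ∪ J.image φB →
      (C.submatrix id (fun p : Fin (n₁ + n₂) =>
        (S.orderIsoOfFin hS p : Fin (m₁ + m₂)))).det =
        (-1 : ℝ) ^ (((S.filter (fun x => ∃ j, φA j = x)) ×ˢ
            (S.filter (fun x => ∃ j, φB j = x))).filter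
              (fun q => q.2 < q.1)).card *
          (A.submatrix id (fun p : Fin n₁ => (I.orderIsoOfFin hI p : Fin m₁))).det *
          (B.submatrix id (fun p : Fin n₂ => (J.orderIsoOfFin hJ p : Fin m₂))).det) := by
  constructor
  · intro hk
    set σ := S.orderIsoOfFin hS with hσ
    -- the set of positions whose column is of A-type / B-type
    set TA := (univ : Finset (Fin (n₁ + n₂))).filter
      (fun p => ∃ j, φA j = (σ p : Fin (m₁ + m₂))) with hTA
    set TB := (univ : Finset (Fin (n₁ + n₂))).filter
      (fun p => ∃ j, φB j = (σ p : Fin (m₁ + m₂))) with hTB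
    clear_value TA TB
    have hTAcard : TA.card = (S.filter (fun x => ∃ j, φA j = x)).card := by
      refine Finset.card_bij (fun p _ => (σ p : Fin (m₁ + m₂))) ?_ ?_ ?_
      · intro p hp
        simp only [hTA, mem_filter, mem_univ, true_and] at hp ⊢
        exact ⟨(σ p).2, hp⟩
      · intro a _ b _ h
        exact σ.injective (Subtype.ext h)
      · intro x hx
        simp only [mem_filter] at hx
        refine ⟨σ.symm ⟨x, hx.1⟩, ?_, by simp⟩
        simp only [hTA, mem_filter, mem_univ, true_and, OrderIso.apply_symm_apply]
        exact hx.2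
    have hBnotA : ∀ x : Fin (m₁ + m₂), (∃ j, φB j = x) ↔ ¬ ∃ j, φA j = x :=
      fun x => by rw [hpart x]; exact not_not.symm
    have hTBcard : TB.card = n₁ + n₂ - TA.card := by
      have h := Finset.card_filter_add_card_filter_not
        (s := (univ : Finset (Fin (n₁ + n₂))))
        (p := fun p => ∃ j, φA j = (σ p : Fin (m₁ + m₂)))
      have hTBeq : TB = (univ : Finset (Fin (n₁ + n₂))).filter
          (fun p => ¬ ∃ j, φA j = (σ p : Fin (m₁ + m₂))) := by
        rw [hTB]
        exact Finset.filter_congr (fun p _ => hBnotA _)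
      rw [← hTA, ← hTBeq] at h
      simp only [Finset.card_univ, Fintype.card_fin] at h
      omega
    rw [Matrix.det_apply]
    apply Finset.sum_eq_zero
    intro ρ _
    suffices h : ∃ p, C (ρ p) (σ p : Fin (m₁ + m₂)) = 0 by
      obtain ⟨p, hp⟩ := h
      rw [Finset.prod_eq_zero (Finset.mem_univ p), smul_zero]
      simpa using hp
    rcases hk.lt_or_gt with hlt | hlt
    · -- fewer than n₁ A-columns : too many B-columns, one hits a top row
      rw [hTAcard] at hTBcard
      have hcard : n₂ < TB.card := by omega
      have hex : ∃ p ∈ TB, (ρ p).val < n₁ := by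
        by_contra hco
        push_neg at hco
        have hsub : TB.image ρ ⊆ (univ : Finset (Fin (n₁ + n₂))).filter
            (fun r => ¬ r.val < n₁) := by
          intro r hr
          obtain ⟨p, hp, rfl⟩ := Finset.mem_image.mp hr
          simp only [mem_filter, mem_univ, true_and, not_lt]
          exact hco p hp
        have := Finset.card_le_card hsub
        rw [Finset.card_image_of_injective _ ρ.injective, card_ge_filter] at this
        omega
      obtain ⟨p, hp, hge⟩ := hex
      simp only [hTB, mem_filter, mem_univ, true_and] at hp
      obtain ⟨j, hj⟩ := hp
      refine ⟨p, ?_⟩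
      rcases h' : finSumFinEquiv.symm (ρ p) with i | i
      · have : ρ p = Fin.castAdd n₂ i := by
          rw [← finSumFinEquiv_apply_left, ← h', Equiv.apply_symm_apply]
        rw [this, ← hj]
        exact hCA0 i j
      · exfalso
        have : ρ p = Fin.natAdd n₁ i := by
          rw [← finSumFinEquiv_apply_right, ← h', Equiv.apply_symm_apply]
        rw [this] at hge
        simp [Fin.natAdd] at hge
    · -- more than n₁ A-columns : one hits a bottom row
      have hex : ∃ p ∈ TA, ¬ (ρ p).val < n₁ := by
        by_contra hco
        push_neg at hco
        have hsub : TA.image ρ ⊆ (univ : Finset (Fin (n₁ + n₂))).filter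
            (fun r => r.val < n₁) := by
          intro r hr
          obtain ⟨p, hp, rfl⟩ := Finset.mem_image.mp hr
          simp only [mem_filter, mem_univ, true_and]
          exact hco p hp
        have := Finset.card_le_card hsub
        rw [Finset.card_image_of_injective _ ρ.injective, card_lt_filter] at this
        omega
      obtain ⟨p, hp, hge⟩ := hex
      simp only [hTA, mem_filter, mem_univ, true_and] at hp
      obtain ⟨j, hj⟩ := hp
      refine ⟨p, ?_⟩
      rcases h' : finSumFinEquiv.symm (ρ p) with i | i
      · exfalso
        have : ρ p = Fin.castAdd n₂ i := by
          rw [← finSumFinEquiv_apply_left, ← h', Equiv.apply_symm_apply]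
        rw [this] at hge
        exact hge i.2
      · have : ρ p = Fin.natAdd n₁ i := by
          rw [← finSumFinEquiv_apply_right, ← h', Equiv.apply_symm_apply]
        rw [this, ← hj]
        exact hCB0 i j
  · intro I J hI hJ hSeq
    set σ := S.orderIsoOfFin hS with hσdef
    set oA := I.orderIsoOfFin hI with hoA
    set oB := J.orderIsoOfFin hJ with hoB
    set a : Fin n₁ → Fin (m₁ + m₂) := fun p => φA (oA p) with ha
    set b : Fin n₂ → Fin (m₁ + m₂) := fun p => φB (oB p) with hb
    have hamono : StrictMono a := fun p q h => hφA (Subtype.coe_lt_coe.mpr (oA.strictMono h))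
    have hbmono : StrictMono b := fun p q h => hφB (Subtype.coe_lt_coe.mpr (oB.strictMono h))
    have hab : ∀ p q, a p ≠ b q := by
      intro p q h
      exact (hpart (b q)).mp ⟨_, h⟩ ⟨_, rfl⟩
    set τ : Fin (n₁ + n₂) → Fin (m₁ + m₂) :=
      fun p => Sum.elim a b (finSumFinEquiv.symm p) with hτ
    have hτinj : Function.Injective τ := by
      intro p q h
      apply finSumFinEquiv.symm.injective
      show finSumFinEquiv.symm p = finSumFinEquiv.symm q
      have h' : Sum.elim a b (finSumFinEquiv.symm p) = Sum.elim a b (finSumFinEquiv.symm q) := h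
      rcases hp : finSumFinEquiv.symm p with i | i <;>
        rcases hq : finSumFinEquiv.symm q with i' | i' <;>
          rw [hp, hq] at h' <;> simp only [Sum.elim_inl, Sum.elim_inr] at h'
      · rw [hamono.injective h']
      · exact absurd h' (hab i i')
      · exact absurd h'.symm (hab i' i)
      · rw [hbmono.injective h']
    have hτS : ∀ p, τ p ∈ S := by
      intro p
      rw [hSeq]
      show Sum.elim a b (finSumFinEquiv.symm p) ∈ _
      rcases finSumFinEquiv.symm p with i | i <;> simp only [Sum.elim_inl, Sum.elim_inr]
      · exact mem_union_left _ (mem_image.mpr ⟨(oA i : Fin m₁), (oA i).2, rfl⟩)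
      · exact mem_union_right _ (mem_image.mpr ⟨(oB i : Fin m₂), (oB i).2, rfl⟩)
    set f : Fin (n₁ + n₂) → Fin (n₁ + n₂) := fun p => σ.symm ⟨τ p, hτS p⟩ with hf
    have hfinj : Function.Injective f := by
      intro p q h
      exact hτinj (Subtype.ext_iff.mp (σ.symm.injective h))
    set π : Equiv.Perm (Fin (n₁ + n₂)) :=
      Equiv.ofBijective f (Finite.injective_iff_bijective.mp hfinj) with hπdef
    have hπ : ∀ p, (σ (π p) : Fin (m₁ + m₂)) = τ p := by
      intro p
      have : π p = f p := rfl
      rw [this, hf]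
      simp
    have hBnotA : ∀ x : Fin (m₁ + m₂), (∃ j, φB j = x) ↔ ¬ ∃ j, φA j = x :=
      fun x => by rw [hpart x]; exact not_not.symm
    have hSA : S.filter (fun x => ∃ j, φA j = x) = I.image φA := by
      rw [hSeq]
      ext x
      simp only [mem_filter, mem_union, mem_image]
      constructor
      · rintro ⟨hx | hx, hPA⟩
        · exact hx
        · obtain ⟨j, _, rfl⟩ := hx
          exact absurd ⟨j, rfl⟩ ((hpart (φB j)).mp hPA)
      · rintro ⟨j, hj, rfl⟩
        exact ⟨Or.inl ⟨j, hj, rfl⟩, ⟨j, rfl⟩⟩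
    have hSB : S.filter (fun x => ∃ j, φB j = x) = J.image φB := by
      rw [hSeq]
      ext x
      simp only [mem_filter, mem_union, mem_image]
      constructor
      · rintro ⟨hx | hx, hPB⟩
        · obtain ⟨j, _, rfl⟩ := hx
          exact absurd ⟨j, rfl⟩ ((hBnotA (φA j)).mp hPB)
        · exact hx
      · rintro ⟨j, hj, rfl⟩
        exact ⟨Or.inr ⟨j, hj, rfl⟩, ⟨j, rfl⟩⟩
    set A' := A.submatrix id (fun p : Fin n₁ => (oA p : Fin m₁)) with hA'
    set B' := B.submatrix id (fun p : Fin n₂ => (oB p : Fin m₂)) with hB'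
    have hblock : C.submatrix id τ =
        (Matrix.fromBlocks A' 0 0 B').submatrix
          (finSumFinEquiv.symm) (finSumFinEquiv.symm) := by
      ext p q
      show C p (τ q) = _
      simp only [Matrix.submatrix_apply]
      rcases hp : finSumFinEquiv.symm p with i | i <;>
        rcases hq : finSumFinEquiv.symm q with i' | i'
      · have hp' : p = Fin.castAdd n₂ i := by
          rw [← finSumFinEquiv_apply_left, ← hp, Equiv.apply_symm_apply]
        have hq' : τ q = a i' := by
          show Sum.elim a b (finSumFinEquiv.symm q) = _
          rw [hq]; rfl
        rw [hp', hq', Matrix.fromBlocks_apply₁₁]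
        exact hCA i (oA i')
      · have hp' : p = Fin.castAdd n₂ i := by
          rw [← finSumFinEquiv_apply_left, ← hp, Equiv.apply_symm_apply]
        have hq' : τ q = b i' := by
          show Sum.elim a b (finSumFinEquiv.symm q) = _
          rw [hq]; rfl
        rw [hp', hq', Matrix.fromBlocks_apply₁₂]
        exact hCA0 i (oB i')
      · have hp' : p = Fin.natAdd n₁ i := by
          rw [← finSumFinEquiv_apply_right, ← hp, Equiv.apply_symm_apply]
        have hq' : τ q = a i' := by
          show Sum.elim a b (finSumFinEquiv.symm q) = _
          rw [hq]; rfl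
        rw [hp', hq', Matrix.fromBlocks_apply₂₁]
        exact hCB0 i (oA i')
      · have hp' : p = Fin.natAdd n₁ i := by
          rw [← finSumFinEquiv_apply_right, ← hp, Equiv.apply_symm_apply]
        have hq' : τ q = b i' := by
          show Sum.elim a b (finSumFinEquiv.symm q) = _
          rw [hq]; rfl
        rw [hp', hq', Matrix.fromBlocks_apply₂₂]
        exact hCB i (oB i')
    have hdet1 : C.submatrix id (fun p : Fin (n₁ + n₂) => (σ p : Fin (m₁ + m₂))) =
        (C.submatrix id τ).submatrix id ⇑π⁻¹ := by
      ext p q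
      simp only [Matrix.submatrix_apply, id]
      congr 1
      rw [← hπ (π⁻¹ q), ← Equiv.Perm.mul_apply, mul_inv_cancel, Equiv.Perm.one_apply]
    have hdet : (C.submatrix id (fun p : Fin (n₁ + n₂) =>
        (σ p : Fin (m₁ + m₂)))).det =
        ((Equiv.Perm.sign π : ℤ) : ℝ) * (A'.det * B'.det) := by
      rw [hdet1, Matrix.det_permute', hblock, Matrix.det_submatrix_equiv_self,
        Matrix.det_fromBlocks_zero₂₁, Equiv.Perm.sign_inv]
    set K := (((S.filter (fun x => ∃ j, φA j = x)) ×ˢ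
        (S.filter (fun x => ∃ j, φB j = x))).filter (fun q => q.2 < q.1)).card with hK
    have hamem : ∀ i : Fin n₁, a i ∈ S.filter (fun x => ∃ j, φA j = x) := by
      intro i
      rw [hSA]
      exact mem_image.mpr ⟨(oA i : Fin m₁), (oA i).2, rfl⟩
    have hbmem : ∀ i : Fin n₂, b i ∈ S.filter (fun x => ∃ j, φB j = x) := by
      intro i
      rw [hSB]
      exact mem_image.mpr ⟨(oB i : Fin m₂), (oB i).2, rfl⟩
    have hπlt : ∀ p q : Fin (n₁ + n₂), π p < π q ↔ τ p < τ q := by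
      intro p q
      rw [← σ.lt_iff_lt, ← Subtype.coe_lt_coe, hπ p, hπ q]
    have hτa : ∀ (p : Fin (n₁ + n₂)) (i : Fin n₁),
        finSumFinEquiv.symm p = Sum.inl i → τ p = a i := by
      intro p i h
      show Sum.elim a b (finSumFinEquiv.symm p) = _
      rw [h]; rfl
    have hτb : ∀ (p : Fin (n₁ + n₂)) (i : Fin n₂),
        finSumFinEquiv.symm p = Sum.inr i → τ p = b i := by
      intro p i h
      show Sum.elim a b (finSumFinEquiv.symm p) = _
      rw [h]; rfl
    have hvl : ∀ (p : Fin (n₁ + n₂)) (i : Fin n₁),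
        finSumFinEquiv.symm p = Sum.inl i → (p : ℕ) = (i : ℕ) := by
      intro p i h
      have hp' : p = Fin.castAdd n₂ i := by
        rw [← finSumFinEquiv_apply_left, ← h, Equiv.apply_symm_apply]
      rw [hp']; rfl
    have hvr : ∀ (p : Fin (n₁ + n₂)) (i : Fin n₂),
        finSumFinEquiv.symm p = Sum.inr i → (p : ℕ) = n₁ + (i : ℕ) := by
      intro p i h
      have hp' : p = Fin.natAdd n₁ i := by
        rw [← finSumFinEquiv_apply_right, ← h, Equiv.apply_symm_apply]
      rw [hp']; rfl
    have hKeq : ((Equiv.Perm.finPairsLT (n₁ + n₂)).filter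
        (fun x => π x.1 ≤ π x.2)).card = K := by
      rw [hK]
      refine Finset.card_bij
        (fun x _ => ((τ x.2, τ x.1) : Fin (m₁ + m₂) × Fin (m₁ + m₂))) ?_ ?_ ?_
      · rintro ⟨x1, x2⟩ hx
        simp only [mem_filter, Equiv.Perm.mem_finPairsLT] at hx
        obtain ⟨hlt, hle⟩ := hx
        have hne : π x1 ≠ π x2 := fun h => absurd (π.injective h) (ne_of_gt hlt)
        have hτlt : τ x1 < τ x2 := (hπlt x1 x2).mp (lt_of_le_of_ne hle hne)
        simp only [mem_filter, mem_product]
        rcases h2 : finSumFinEquiv.symm x2 with i₂ | i₂ <;>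
          rcases h1 : finSumFinEquiv.symm x1 with i₁ | i₁
        · exfalso
          have hi : i₂ < i₁ := by
            rw [Fin.lt_def] at hlt ⊢
            rw [hvl _ _ h1, hvl _ _ h2] at hlt
            exact hlt
          have hcon := hamono hi
          rw [← hτa _ _ h2, ← hτa _ _ h1] at hcon
          exact lt_asymm hτlt hcon
        · refine ⟨⟨?_, ?_⟩, hτlt⟩
          · rw [hτa _ _ h2]
            exact mem_filter.mp (hamem i₂)
          · rw [hτb _ _ h1]
            exact mem_filter.mp (hbmem i₁)
        · exfalso
          rw [Fin.lt_def, hvr _ _ h2, hvl _ _ h1] at hlt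
          have := i₁.2
          omega
        · exfalso
          have hi : i₂ < i₁ := by
            rw [Fin.lt_def] at hlt ⊢
            rw [hvr _ _ h2, hvr _ _ h1] at hlt
            omega
          have hcon := hbmono hi
          rw [← hτb _ _ h2, ← hτb _ _ h1] at hcon
          exact lt_asymm hτlt hcon
      · rintro ⟨x1, x2⟩ _ ⟨y1, y2⟩ _ h
        simp only [Prod.mk.injEq] at h
        obtain ⟨h2, h1⟩ := h
        obtain rfl := hτinj h2
        obtain rfl := hτinj h1
        rfl
      · rintro ⟨u, v⟩ hq
        simp only [mem_filter, mem_product] at hq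
        obtain ⟨⟨hu, hv⟩, hvu⟩ := hq
        have hu' : u ∈ I.image φA := by rw [← hSA]; exact mem_filter.mpr hu
        have hv' : v ∈ J.image φB := by rw [← hSB]; exact mem_filter.mpr hv
        obtain ⟨ju, hju, rfl⟩ := mem_image.mp hu'
        obtain ⟨jv, hjv, rfl⟩ := mem_image.mp hv'
        set pu : Fin n₁ := oA.symm ⟨ju, hju⟩ with hpu
        set pv : Fin n₂ := oB.symm ⟨jv, hjv⟩ with hpv
        have hau : a pu = φA ju := by rw [ha]; simp [hpu]
        have hbv : b pv = φB jv := by rw [hb]; simp [hpv]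
        have hs1 : finSumFinEquiv.symm (finSumFinEquiv ((Sum.inr pv : Fin n₁ ⊕ Fin n₂))) = (Sum.inr pv : Fin n₁ ⊕ Fin n₂) :=
          Equiv.symm_apply_apply _ _
        have hs2 : finSumFinEquiv.symm (finSumFinEquiv ((Sum.inl pu : Fin n₁ ⊕ Fin n₂))) = (Sum.inl pu : Fin n₁ ⊕ Fin n₂) :=
          Equiv.symm_apply_apply _ _
        have hτ1 : τ (finSumFinEquiv ((Sum.inr pv : Fin n₁ ⊕ Fin n₂))) = b pv := hτb _ _ hs1
        have hτ2 : τ (finSumFinEquiv ((Sum.inl pu : Fin n₁ ⊕ Fin n₂))) = a pu := hτa _ _ hs2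
        refine ⟨⟨finSumFinEquiv ((Sum.inr pv : Fin n₁ ⊕ Fin n₂)), finSumFinEquiv ((Sum.inl pu : Fin n₁ ⊕ Fin n₂))⟩, ?_, ?_⟩
        · simp only [mem_filter, Equiv.Perm.mem_finPairsLT]
          constructor
          · show finSumFinEquiv ((Sum.inl pu : Fin n₁ ⊕ Fin n₂)) < finSumFinEquiv ((Sum.inr pv : Fin n₁ ⊕ Fin n₂))
            rw [Fin.lt_def, hvl _ _ hs2, hvr _ _ hs1]
            have := pu.2
            omega
          · apply le_of_lt
            rw [hπlt]
            show τ (finSumFinEquiv ((Sum.inr pv : Fin n₁ ⊕ Fin n₂))) < τ (finSumFinEquiv ((Sum.inl pu : Fin n₁ ⊕ Fin n₂)))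
            rw [hτ1, hτ2, hbv, hau]
            exact hvu
        · show (τ (finSumFinEquiv ((Sum.inl pu : Fin n₁ ⊕ Fin n₂))), τ (finSumFinEquiv ((Sum.inr pv : Fin n₁ ⊕ Fin n₂)))) = _
          rw [hτ1, hτ2, hau, hbv]
    have hsign : ((Equiv.Perm.sign π : ℤ) : ℝ) = (-1 : ℝ) ^ K := by
      have h := my_sign_eq_pow π
      rw [hKeq] at h
      rw [h]
      push_cast
      norm_num
    rw [hdet, hsign]
    ring
end

section
/- Let κ₁ < κ₂ < ⋯ < κ_M be real numbers, and let A be an N × M real matrix of rank N such that every N × N minor Δ_I(A) is nonnegative (and, since rank A = N, at least one minor is strictly positive). Define ξ_j(x,y,t) = κ_j x + κ_j² y + κ_j³ t, E_j = exp(ξ_j), f_i = Σ_j a_{i,j} E_j, and τ(x,y,t) = Wr(f₁,…,f_N)(x,y,t), the Wronskian in x. Then τ(x,y,t) > 0 for all (x,y,t) ∈ ℝ³. -/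
open Finset Matrix

namespace TauAux

variable {N M : ℕ}

instance : DecidablePred (fun f : Fin N → Fin M => StrictMono f) :=
  fun _ => decidable_of_iff (∀ a b, a < b → _ < _)
    ⟨fun h _ _ hab => h _ _ hab, fun h _ _ hab => h hab⟩

lemma hasDerivAt_expAffine (a b x : ℝ) :
    HasDerivAt (fun x' => Real.exp (a * x' + b)) (a * Real.exp (a * x + b)) x := by
  have h1 : HasDerivAt (fun x' : ℝ => a * x' + b) a x := by
    simpa using ((hasDerivAt_id x).const_mul a).add_const b
  simpa [mul_comm] using h1.exp

lemma iteratedDeriv_sum_exp (κ b : Fin M → ℝ) (n : ℕ) (c : Fin M → ℝ) (x : ℝ) :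
    iteratedDeriv n (fun x' => ∑ l, c l * Real.exp (κ l * x' + b l)) x
      = ∑ l, c l * κ l ^ n * Real.exp (κ l * x + b l) := by
  induction n generalizing c x with
  | zero => simp
  | succ n ih =>
    rw [iteratedDeriv_succ']
    have hderiv : (deriv fun x' => ∑ l, c l * Real.exp (κ l * x' + b l))
        = fun x' => ∑ l, (c l * κ l) * Real.exp (κ l * x' + b l) := by
      funext x'
      refine HasDerivAt.deriv ?_
      refine HasDerivAt.fun_sum fun l _ => ?_
      have := (hasDerivAt_expAffine (κ l) (b l) x').const_mul (c l)
      simpa [mul_assoc] using this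
    rw [hderiv, ih]
    refine Finset.sum_congr rfl fun l _ => ?_
    ring

lemma det_mul_expand (B : Matrix (Fin N) (Fin M) ℝ) (C : Matrix (Fin M) (Fin N) ℝ) :
    (B * C).det = ∑ f : Fin N → Fin M, (∏ i, B i (f i)) * (C.submatrix f id).det := by
  have h0 : (B * C).det
      = Matrix.detRowAlternating (R := ℝ) (n := Fin N) (fun i => ∑ l, B i l • C l) := by
    congr 1
    ext i j
    simp [Matrix.mul_apply]
  rw [h0]
  have h1 : Matrix.detRowAlternating (R := ℝ) (n := Fin N) (fun i => ∑ l, B i l • C l)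
      = ∑ r : Fin N → Fin M,
          Matrix.detRowAlternating (R := ℝ) (n := Fin N) (fun i => B i (r i) • C (r i)) :=
    (Matrix.detRowAlternating (R := ℝ) (n := Fin N)).toMultilinearMap.map_sum
      (g := fun i l => B i l • C l)
  rw [h1]
  refine Finset.sum_congr rfl fun r _ => ?_
  have h2 : Matrix.detRowAlternating (R := ℝ) (n := Fin N) (fun i => B i (r i) • C (r i))
      = (∏ i, B i (r i)) • Matrix.detRowAlternating (R := ℝ) (n := Fin N) (fun i => C (r i)) :=
    (Matrix.detRowAlternating (R := ℝ) (n := Fin N)).toMultilinearMap.map_smul_univ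
      (fun i => B i (r i)) (fun i => C (r i))
  rw [h2, smul_eq_mul]
  rfl

lemma cardOf {f : Fin N → Fin M} (hf : Function.Injective f) :
    (Finset.image f Finset.univ).card = N := by
  rw [Finset.card_image_of_injective _ hf, Finset.card_univ, Fintype.card_fin]

lemma range_iff (f : Fin N → Fin M) :
    ∀ z, z ∈ Set.range f ↔ z ∈ (Finset.image f Finset.univ : Set (Fin M)) := by
  simp

/-- The permutation relating an injective map to the increasing enumeration of its image. -/
noncomputable def permOf (f : Fin N → Fin M) (hf : Function.Injective f)
    (hcard : (Finset.image f Finset.univ).card = N) : Equiv.Perm (Fin N) :=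
  (Equiv.ofInjective f hf).trans ((Equiv.subtypeEquivRight (range_iff f)).trans
    ((Finset.image f Finset.univ).orderIsoOfFin hcard).toEquiv.symm)

lemma orderEmb_permOf (f : Fin N → Fin M) (hf : Function.Injective f)
    (hcard : (Finset.image f Finset.univ).card = N) (i : Fin N) :
    (Finset.image f Finset.univ).orderEmbOfFin hcard (permOf f hf hcard i) = f i := by
  rw [← Finset.coe_orderIsoOfFin_apply]
  simp [permOf]

lemma cauchy_binet (B : Matrix (Fin N) (Fin M) ℝ) (C : Matrix (Fin M) (Fin N) ℝ) :
    (B * C).det = ∑ f ∈ univ.filter (fun f : Fin N → Fin M => StrictMono f),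
      (B.submatrix id f).det * (C.submatrix f id).det := by
  classical
  rw [det_mul_expand]
  -- only injective `f` contribute
  have hstep1 : ∑ f : Fin N → Fin M, (∏ i, B i (f i)) * (C.submatrix f id).det
      = ∑ f ∈ univ.filter (fun f : Fin N → Fin M => Function.Injective f),
          (∏ i, B i (f i)) * (C.submatrix f id).det := by
    refine (Finset.sum_filter_of_ne fun f _ hne => ?_).symm
    by_contra h
    rw [Function.not_injective_iff] at h
    obtain ⟨i, j, hfij, hij⟩ := h
    refine hne ?_
    have h0 : (C.submatrix f id).det = 0 := by
      apply Matrix.det_zero_of_row_eq hij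
      funext k
      simp [hfij]
    rw [h0, mul_zero]
  rw [hstep1]
  -- expand the right-hand side over permutations
  have hRHS : ∀ g : Fin N → Fin M,
      (B.submatrix id g).det * (C.submatrix g id).det
      = ∑ σ : Equiv.Perm (Fin N),
          (∏ i, B i (g (σ i))) * (C.submatrix (g ∘ σ) id).det := by
    intro g
    have hB : (B.submatrix id g).det
        = ∑ σ : Equiv.Perm (Fin N),
            ((Equiv.Perm.sign σ : ℤ) : ℝ) * ∏ i, B i (g (σ i)) := by
      rw [← Matrix.det_transpose, Matrix.det_apply']
      refine Finset.sum_congr rfl fun σ _ => ?_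
      simp [Matrix.transpose_apply, Matrix.submatrix_apply]
    rw [hB, Finset.sum_mul]
    refine Finset.sum_congr rfl fun σ _ => ?_
    have hC : (C.submatrix (g ∘ σ) id).det
        = ((Equiv.Perm.sign σ : ℤ) : ℝ) * (C.submatrix g id).det := by
      have h := Matrix.det_permute σ (C.submatrix g id)
      rw [Matrix.submatrix_submatrix] at h
      simpa using h
    rw [hC]
    ring
  have hR : ∑ g ∈ univ.filter (fun f : Fin N → Fin M => StrictMono f),
      (B.submatrix id g).det * (C.submatrix g id).det
      = ∑ p ∈ (univ.filter (fun f : Fin N → Fin M => StrictMono f)) ×ˢ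
          (univ : Finset (Equiv.Perm (Fin N))),
        (∏ i, B i (p.1 (p.2 i))) * (C.submatrix (p.1 ∘ p.2) id).det := by
    rw [Finset.sum_product]
    exact Finset.sum_congr rfl fun g _ => hRHS g
  rw [hR]
  -- bijection between pairs (strictly monotone g, permutation σ) and injective f
  refine (Finset.sum_bij'
    (fun p _ => p.1 ∘ p.2)
    (fun f hf =>
      (⇑((Finset.image f Finset.univ).orderEmbOfFin
          (cardOf (Finset.mem_filter.mp hf).2)),
       permOf f (Finset.mem_filter.mp hf).2 (cardOf (Finset.mem_filter.mp hf).2)))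
    ?hi ?hj ?left ?right ?termeq).symm
  case hi =>
    intro p hp
    rw [Finset.mem_product] at hp
    have hg : StrictMono p.1 := (Finset.mem_filter.mp hp.1).2
    exact Finset.mem_filter.mpr ⟨Finset.mem_univ _, hg.injective.comp p.2.injective⟩
  case hj =>
    intro f hf
    exact Finset.mem_product.mpr ⟨Finset.mem_filter.mpr ⟨Finset.mem_univ _,
      (Finset.orderEmbOfFin _ _).strictMono⟩, Finset.mem_univ _⟩
  case left =>
    intro p hp
    rw [Finset.mem_product] at hp
    have hg : StrictMono p.1 := (Finset.mem_filter.mp hp.1).2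
    have hfinj : Function.Injective (p.1 ∘ p.2) := hg.injective.comp p.2.injective
    have hcard := cardOf hfinj
    have hgeq : ⇑((Finset.image (p.1 ∘ p.2) Finset.univ).orderEmbOfFin hcard) = p.1 := by
      refine (Finset.orderEmbOfFin_unique hcard (f := p.1) (fun z => ?_) hg).symm
      have himg : Finset.image (p.1 ∘ ⇑p.2) Finset.univ = Finset.image p.1 Finset.univ := by
        rw [← Finset.image_image]
        congr 1
        exact Finset.image_univ_equiv p.2
      rw [himg]
      exact Finset.mem_image_of_mem _ (Finset.mem_univ _)
    refine Prod.ext ?_ ?_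
    · exact hgeq
    · refine Equiv.ext fun i => ?_
      apply ((Finset.image (p.1 ∘ p.2) Finset.univ).orderEmbOfFin hcard).injective
      rw [orderEmb_permOf (p.1 ∘ p.2) hfinj hcard i]
      exact (congrFun hgeq (p.2 i)).symm
  case right =>
    intro f hf
    funext i
    exact orderEmb_permOf f (Finset.mem_filter.mp hf).2 (cardOf (Finset.mem_filter.mp hf).2) i
  case termeq =>
    intro p hp
    rfl

lemma exists_pos_minor (A : Matrix (Fin N) (Fin M) ℝ) (hrank : A.rank = N)
    (hminor : ∀ g : Fin N → Fin M, StrictMono g → 0 ≤ (A.submatrix id g).det) :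
    ∃ g : Fin N → Fin M, StrictMono g ∧ 0 < (A.submatrix id g).det := by
  classical
  have hunit : (A * Aᵀ).det ≠ 0 := by
    have hr : (A * Aᵀ).rank = N := by rw [Matrix.rank_self_mul_transpose, hrank]
    have htop : LinearMap.range (A * Aᵀ).mulVecLin = ⊤ := by
      apply Submodule.eq_top_of_finrank_eq
      rw [show Module.finrank ℝ (LinearMap.range (A * Aᵀ).mulVecLin) = (A * Aᵀ).rank from rfl,
        hr, Module.finrank_fintype_fun_eq_card, Fintype.card_fin]
    have hsurj : Function.Surjective (A * Aᵀ).mulVec := by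
      have := LinearMap.range_eq_top.mp htop
      exact this
    have : IsUnit (A * Aᵀ) := Matrix.mulVec_surjective_iff_isUnit.mp hsurj
    exact ((Matrix.isUnit_iff_isUnit_det _).mp this).ne_zero
  have hcb := cauchy_binet A Aᵀ
  by_contra hcon
  push_neg at hcon
  apply hunit
  rw [hcb]
  refine Finset.sum_eq_zero fun g hg => ?_
  have hgm : StrictMono g := (Finset.mem_filter.mp hg).2
  have h1 : (A.submatrix id g).det = 0 :=
    le_antisymm (hcon g hgm) (hminor g hgm)
  have h2 : (Aᵀ.submatrix g id) = (A.submatrix id g)ᵀ := by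
    ext i j; simp
  rw [h1, h2, zero_mul]

end TauAux

open TauAux in
/-- Positivity of the KP τ-function: for ordered parameters κ₁ < ⋯ < κ_M and
a full-rank N × M matrix A with all maximal minors nonnegative, the Wronskian
τ-function built from the exponentials E_j is strictly positive everywhere. -/
theorem tau_function_pos (N M : ℕ) (κ : Fin M → ℝ) (hκ : StrictMono κ)
    (A : Matrix (Fin N) (Fin M) ℝ) (hrank : A.rank = N)
    (hminor : ∀ (I : Finset (Fin M)) (hI : I.card = N),
      0 ≤ (A.submatrix id (fun p : Fin N => (I.orderIsoOfFin hI p : Fin M))).det)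
    (x y t : ℝ) :
    0 < (Matrix.of fun i j : Fin N =>
        iteratedDeriv i.val
          (fun x' => ∑ l, A j l *
            Real.exp (κ l * x' + κ l ^ 2 * y + κ l ^ 3 * t)) x).det := by
  classical
  set b : Fin M → ℝ := fun l => κ l ^ 2 * y + κ l ^ 3 * t with hb
  set E : Fin M → ℝ := fun l => Real.exp (κ l * x + b l) with hE
  have hEpos : ∀ l, 0 < E l := fun l => Real.exp_pos _
  -- minors of A indexed by strictly monotone maps are nonnegative
  have hminor' : ∀ g : Fin N → Fin M, StrictMono g → 0 ≤ (A.submatrix id g).det := by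
    intro g hg
    have hcard : (Finset.image g Finset.univ).card = N := by
      rw [Finset.card_image_of_injective _ hg.injective, Finset.card_univ, Fintype.card_fin]
    have hgeq : (fun p : Fin N => ((Finset.image g Finset.univ).orderIsoOfFin hcard p : Fin M))
        = g := by
      funext p
      rw [Finset.coe_orderIsoOfFin_apply]
      exact congrFun (Finset.orderEmbOfFin_unique hcard
        (fun z => Finset.mem_image_of_mem _ (Finset.mem_univ _)) hg).symm p
    have := hminor (Finset.image g Finset.univ) hcard
    rwa [hgeq] at this
  -- rewrite the Wronskian matrix as a product B * Aᵀ
  set B : Matrix (Fin N) (Fin M) ℝ := Matrix.of (fun i l => κ l ^ (i : ℕ) * E l) with hB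
  have hW : (Matrix.of fun i j : Fin N =>
        iteratedDeriv i.val
          (fun x' => ∑ l, A j l *
            Real.exp (κ l * x' + κ l ^ 2 * y + κ l ^ 3 * t)) x) = B * Aᵀ := by
    ext i j
    have hfun : (fun x' => ∑ l, A j l * Real.exp (κ l * x' + κ l ^ 2 * y + κ l ^ 3 * t))
        = fun x' => ∑ l, A j l * Real.exp (κ l * x' + b l) := by
      funext x'
      refine Finset.sum_congr rfl fun l _ => ?_
      rw [hb]; ring_nf
    rw [Matrix.of_apply, hfun, iteratedDeriv_sum_exp, Matrix.mul_apply]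
    refine Finset.sum_congr rfl fun l _ => ?_
    simp [hB, hE, Matrix.transpose_apply]
    ring
  rw [hW, cauchy_binet]
  -- each minor of B is positive for strictly monotone g
  have hBpos : ∀ g : Fin N → Fin M, StrictMono g → 0 < (B.submatrix id g).det := by
    intro g hg
    have hBg : B.submatrix id g
        = Matrix.of (fun i p => (fun p => E (g p)) p * (Matrix.vandermonde (κ ∘ g))ᵀ i p) := by
      ext i p
      simp [hB, Matrix.vandermonde]
      ring
    rw [hBg, Matrix.det_mul_row, Matrix.det_transpose, Matrix.det_vandermonde]
    apply mul_pos
    · exact Finset.prod_pos fun p _ => hEpos _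
    · apply Finset.prod_pos
      intro i _
      apply Finset.prod_pos
      intro j hj
      have hij : i < j := Finset.mem_Ioi.mp hj
      have : κ (g i) < κ (g j) := hκ (hg hij)
      simpa [Function.comp] using sub_pos.mpr this
  -- conclude positivity of the sum
  obtain ⟨g₀, hg₀, hg₀pos⟩ := exists_pos_minor A hrank hminor'
  have hAterm : ∀ g : Fin N → Fin M, (Aᵀ.submatrix g id).det = (A.submatrix id g).det := by
    intro g
    have h2 : (Aᵀ.submatrix g id) = (A.submatrix id g)ᵀ := by ext i j; simp
    rw [h2, Matrix.det_transpose]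
  refine Finset.sum_pos' (fun g hg => ?_) ⟨g₀, ?_, ?_⟩
  · have hgm : StrictMono g := (Finset.mem_filter.mp hg).2
    rw [hAterm]
    exact mul_nonneg (hBpos g hgm).le (hminor' g hgm)
  · exact Finset.mem_filter.mpr ⟨Finset.mem_univ _, hg₀⟩
  · rw [hAterm]
    exact mul_pos (hBpos g₀ hg₀) hg₀pos
end

section
/- Let c₀ > 0 and let x < y < z be real numbers with x + y + z = 0 and xy + yz + zx = −(3/4)c₀² (i.e. x, y, z are the three distinct real roots of κ³ − (3c₀²/4)κ − α = 0 for some α). Then −c₀ < x < −c₀/2, −c₀/2 < y < c₀/2, and c₀/2 < z < c₀. In particular, the velocities of the three soliton types satisfy: the right-propagating [1,2]-soliton has velocity v_{[1,2]} = −(x+y) = z ∈ (c₀/2, c₀); the slow [1,3]-soliton has velocity v_{[1,3]} = −(x+z) = y ∈ (−c₀/2, c₀/2); and the left-propagating [2,3]-soliton has velocity v_{[2,3]} = −(y+z) = x ∈ (−c₀, −c₀/2). -/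
/-- Velocity bounds for Boussinesq solitons: if x < y < z are the three real
roots of κ³ − (3c₀²/4)κ − α = 0 (so x+y+z = 0 and xy+yz+zx = −(3/4)c₀²), then
x ∈ (−c₀, −c₀/2), y ∈ (−c₀/2, c₀/2), z ∈ (c₀/2, c₀); in particular the
velocities v_{[i,j]} = −(κ_i + κ_j) satisfy the three stated ranges. -/
theorem boussinesq_velocity_bounds (c₀ x y z : ℝ) (hc : 0 < c₀)
    (hxy : x < y) (hyz : y < z)
    (hsum : x + y + z = 0)
    (hprod : x * y + y * z + z * x = -(3 / 4) * c₀ ^ 2) :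
    (-c₀ < x ∧ x < -c₀ / 2) ∧
    (-c₀ / 2 < y ∧ y < c₀ / 2) ∧
    (c₀ / 2 < z ∧ z < c₀) ∧
    (c₀ / 2 < -(x + y) ∧ -(x + y) < c₀) ∧
    (-c₀ / 2 < -(x + z) ∧ -(x + z) < c₀ / 2) ∧
    (-c₀ < -(y + z) ∧ -(y + z) < -c₀ / 2) := by
  have hz0 : 0 < z := by linarith
  have hx0 : x < 0 := by linarith
  -- x² < c₀² and z² < c₀²
  have hx2 : x ^ 2 < c₀ ^ 2 := by nlinarith [sq_nonneg (y - z)]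
  have hz2 : z ^ 2 < c₀ ^ 2 := by nlinarith [sq_nonneg (x - y)]
  have hxlb : -c₀ < x := by nlinarith
  have hzub : z < c₀ := by nlinarith
  -- y bounds
  have hyub : y < c₀ / 2 := by nlinarith
  have hylb : -c₀ / 2 < y := by nlinarith
  have hy2 : y ^ 2 < c₀ ^ 2 / 4 := by nlinarith
  have hsq : x ^ 2 + y ^ 2 + z ^ 2 = 3 / 2 * c₀ ^ 2 := by nlinarith [sq_nonneg (x+y+z)]
  have hzlb : c₀ / 2 < z := by nlinarith
  have hxub : x < -c₀ / 2 := by nlinarith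
  refine ⟨⟨hxlb, hxub⟩, ⟨hylb, hyub⟩, ⟨hzlb, hzub⟩, ⟨?_, ?_⟩, ⟨?_, ?_⟩, ⟨?_, ?_⟩⟩ <;> linarith
end

section
/- Let c₀ > 0 and let x < y < z be real numbers with x + y + z = 0 and xy + yz + zx = −(3/4)c₀². Then the amplitudes a_{[i,j]} = (κ_i − κ_j)²/2 of the three solitons satisfy: 0 < (y − x)²/2 < (9/8)c₀², (9/8)c₀² < (z − x)²/2 ≤ (3/2)c₀², and 0 < (z − y)²/2 < (9/8)c₀². In particular, the amplitude of any Boussinesq soliton is at most (3/2)c₀², with equality in the middle bound exactly when y = 0. -/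
/-- Amplitude bounds for Boussinesq solitons: if x < y < z are the three real
roots of κ³ − (3c₀²/4)κ − α = 0 (so x+y+z = 0 and xy+yz+zx = −(3/4)c₀²), then
the amplitudes (κ_i − κ_j)²/2 satisfy the stated bounds, with the maximal
amplitude (3/2)c₀² attained exactly when y = 0. -/
theorem boussinesq_amplitude_bounds (c₀ x y z : ℝ) (hc : 0 < c₀)
    (hxy : x < y) (hyz : y < z)
    (hsum : x + y + z = 0)
    (hprod : x * y + y * z + z * x = -(3 / 4) * c₀ ^ 2) :
    (0 < (y - x) ^ 2 / 2 ∧ (y - x) ^ 2 / 2 < (9 / 8) * c₀ ^ 2) ∧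
    ((9 / 8) * c₀ ^ 2 < (z - x) ^ 2 / 2 ∧ (z - x) ^ 2 / 2 ≤ (3 / 2) * c₀ ^ 2) ∧
    (0 < (z - y) ^ 2 / 2 ∧ (z - y) ^ 2 / 2 < (9 / 8) * c₀ ^ 2) ∧
    ((z - x) ^ 2 / 2 = (3 / 2) * c₀ ^ 2 ↔ y = 0) := by
  have hz : z = -(x + y) := by linarith
  subst hz
  have hsq : x ^ 2 + x * y + y ^ 2 = (3 / 4) * c₀ ^ 2 := by nlinarith [hprod]
  refine ⟨⟨by have h := sub_pos.2 hxy; positivity, ?_⟩, ⟨?_, ?_⟩, ⟨by nlinarith, ?_⟩, ?_, ?_⟩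
  · nlinarith [mul_pos (show 0 < -(2*x+y) by linarith) (show 0 < -(x+2*y) by linarith)]
  · nlinarith [mul_pos (show 0 < y - x by linarith) (show 0 < -(2*x+y) by linarith)]
  · nlinarith [sq_nonneg y]
  · nlinarith [mul_pos (show 0 < y - x by linarith) (show 0 < -(2*x+y) by linarith)]
  · intro h; nlinarith [sq_nonneg y]
  · intro h; subst h; nlinarith
end

section
/- Let a ∈ ℝ and let φ : ℝ → ℝ be four times continuously differentiable, satisfying 3a² φ''(s) + (3φ(s)² + φ''(s))'' = 0 for all s ∈ ℝ, and such that φ(s), φ'(s), φ''(s), φ'''(s) → 0 as s → +∞ and as s → −∞. Then φ ≡ 0. Consequently, the Boussinesq equation 3u_{t₂t₂} + (3u² + u_{xx})_{xx} = 0 has no nonzero regular steady propagating-wave solution u(x,t₂) = φ(x + a t₂) decaying (together with its derivatives up to third order) at spatial infinity. -/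
open Filter

/-- The Boussinesq equation with vanishing boundary conditions has no nonzero
regular traveling wave: any C⁴ profile φ satisfying
3a²φ'' + (3φ² + φ'')'' = 0 and decaying (with derivatives up to third order)
at ±∞ is identically zero. -/
theorem boussinesq_no_decaying_traveling_wave (a : ℝ) (φ : ℝ → ℝ)
    (hφ : ContDiff ℝ 4 φ)
    (hode : ∀ s : ℝ,
      3 * a ^ 2 * iteratedDeriv 2 φ s +
        iteratedDeriv 2 (fun s' => 3 * (φ s') ^ 2 + iteratedDeriv 2 φ s') s = 0)
    (h0top : Tendsto φ atTop (nhds 0)) (h0bot : Tendsto φ atBot (nhds 0))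
    (h1top : Tendsto (deriv φ) atTop (nhds 0))
    (h1bot : Tendsto (deriv φ) atBot (nhds 0))
    (h2top : Tendsto (iteratedDeriv 2 φ) atTop (nhds 0))
    (h2bot : Tendsto (iteratedDeriv 2 φ) atBot (nhds 0))
    (h3top : Tendsto (iteratedDeriv 3 φ) atTop (nhds 0))
    (h3bot : Tendsto (iteratedDeriv 3 φ) atBot (nhds 0)) :
    ∀ s : ℝ, φ s = 0 := by
  have key : iteratedDeriv 2 φ = deriv (deriv φ) := by
    rw [iteratedDeriv_succ, iteratedDeriv_one]
  rw [key] at hode h2top h2bot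
  -- regularity
  have hφ1 : ContDiff ℝ 3 (deriv φ) := by
    have := hφ.iterate_deriv' 3 1; simpa using this
  have hφ2 : ContDiff ℝ 2 (deriv (deriv φ)) := by
    have := hφ.iterate_deriv' 2 2
    simpa [Function.iterate_succ, Function.comp] using this
  set G : ℝ → ℝ := fun s => 3 * (φ s) ^ 2 + deriv (deriv φ) s with hG
  have hGc : ContDiff ℝ 2 G :=
    ((contDiff_const.mul ((hφ.of_le (by norm_num)).pow 2)).add hφ2)
  set F : ℝ → ℝ := fun s => 3 * a ^ 2 * φ s + G s with hF
  have hFc : ContDiff ℝ 2 F :=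
    (contDiff_const.mul (hφ.of_le (by norm_num))).add hGc
  -- deriv F
  have hdF : deriv F = fun s => 3 * a ^ 2 * deriv φ s + deriv G s := by
    funext s
    rw [hF]
    rw [deriv_fun_add ((hφ.differentiable (by norm_num)).differentiableAt.const_mul _)
        (hGc.differentiable (by norm_num)).differentiableAt,
      deriv_const_mul _ (hφ.differentiable (by norm_num)).differentiableAt]
  have hG1 : ContDiff ℝ 1 (deriv G) := by
    have := hGc.iterate_deriv' 1 1; simpa using this
  have hddF : ∀ s, deriv (deriv F) s = 0 := by
    intro s
    rw [hdF]
    rw [deriv_fun_add ((hφ1.differentiable (by norm_num)).differentiableAt.const_mul _)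
        (hG1.differentiable (by norm_num)).differentiableAt,
      deriv_const_mul _ (hφ1.differentiable (by norm_num)).differentiableAt]
    have := hode s
    rw [iteratedDeriv_succ, iteratedDeriv_one] at this
    simpa [hG] using this
  -- deriv F is constant
  have hdF1 : ContDiff ℝ 1 (deriv F) := by
    have := hFc.iterate_deriv' 1 1; simpa using this
  have hFlin : ∀ s, F s = F 0 + deriv F 0 * s := by
    have hc : ∀ x y : ℝ, deriv F x = deriv F y :=
      is_const_of_deriv_eq_zero (hdF1.differentiable (by norm_num)) hddF
    set c := deriv F 0 with hcdef
    have hH : ∀ s : ℝ, deriv (fun s => F s - c * s) s = 0 := by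
      intro s
      rw [deriv_fun_sub (hFc.differentiable (by norm_num)).differentiableAt
        (by fun_prop), deriv_const_mul _ differentiableAt_fun_id]
      simp [hc s 0, hcdef]
    have := is_const_of_deriv_eq_zero
      (fun x => ((hFc.differentiable (by norm_num)) x).sub
        ((differentiable_id.const_mul c) x))
      hH
    intro s
    have := this s 0
    simp at this
    linarith
  -- F tends to 0 at ±∞
  have hFtop : Tendsto F atTop (nhds 0) := by
    have : Tendsto F atTop
        (nhds (3 * a ^ 2 * 0 + (3 * 0 ^ 2 + 0))) :=
      ((h0top.const_mul _).add (((h0top.pow 2).const_mul 3).add h2top))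
    simpa using this
  have hFbot : Tendsto F atBot (nhds 0) := by
    have : Tendsto F atBot
        (nhds (3 * a ^ 2 * 0 + (3 * 0 ^ 2 + 0))) :=
      ((h0bot.const_mul _).add (((h0bot.pow 2).const_mul 3).add h2bot))
    simpa using this
  -- slope is zero
  have hc0 : deriv F 0 = 0 := by
    have hdiff : Tendsto (fun s => F (s + 1) - F s) atTop (nhds (0 - 0)) :=
      (hFtop.comp (tendsto_atTop_add_const_right _ 1 tendsto_id)).sub hFtop
    have heq : (fun s : ℝ => F (s + 1) - F s) = fun _ => deriv F 0 := by
      funext s; rw [hFlin (s + 1), hFlin s]; ring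
    rw [heq] at hdiff
    simpa using (tendsto_nhds_unique tendsto_const_nhds hdiff)
  have hFzero : ∀ s, F s = 0 := by
    have hconst : F = fun _ => F 0 := by
      funext s; rw [hFlin s, hc0]; ring
    have h00 : F 0 = 0 :=
      tendsto_nhds_unique (tendsto_const_nhds.congr (fun s => congrFun hconst.symm s)) hFtop
    intro s
    rw [hFlin s, hc0, h00]; ring
  have hφ'' : ∀ s, deriv (deriv φ) s = -(3 * a ^ 2 * φ s + 3 * (φ s) ^ 2) := by
    intro s
    have := hFzero s
    simp only [hF, hG] at this
    linarith
  set E : ℝ → ℝ := fun s => (deriv φ s) ^ 2 + 3 * a ^ 2 * (φ s) ^ 2 + 2 * (φ s) ^ 3 with hEdef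
  have hE : ∀ s, HasDerivAt E 0 s := by
    intro s
    have hdφ : HasDerivAt φ (deriv φ s) s :=
      ((hφ.differentiable (by norm_num)) s).hasDerivAt
    have hd1 : HasDerivAt (deriv φ) (deriv (deriv φ) s) s :=
      ((hφ1.differentiable (by norm_num)) s).hasDerivAt
    have h := ((hd1.pow 2).add (((hdφ.pow 2).const_mul (3 * a ^ 2)).add
      ((hdφ.pow 3).const_mul 2)))
    have hfun : E = fun x => deriv φ x ^ 2 + (3 * a ^ 2 * (φ x) ^ 2 + 2 * (φ x) ^ 3) := by
      funext t; simp only [hEdef]; ring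
    rw [hfun]
    refine h.congr_deriv ?_
    push_cast
    rw [hφ'' s]; ring
  have hEconst := is_const_of_deriv_eq_zero (fun s => (hE s).differentiableAt)
    (fun s => (hE s).deriv)
  have hEtop : Tendsto E atTop (nhds 0) := by
    have : Tendsto E atTop (nhds (0 ^ 2 + 3 * a ^ 2 * 0 ^ 2 + 2 * 0 ^ 3)) :=
      ((h1top.pow 2).add ((h0top.pow 2).const_mul _)).add ((h0top.pow 3).const_mul 2)
    simpa using this
  have hEeq : ∀ s, (deriv φ s) ^ 2 + 3 * a ^ 2 * (φ s) ^ 2 + 2 * (φ s) ^ 3 = 0 := by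
    intro s
    have ht : Tendsto (fun _ : ℝ => E s) atTop (nhds 0) :=
      hEtop.congr (fun t => hEconst t s)
    exact tendsto_nhds_unique tendsto_const_nhds ht
  have hφle : ∀ s, φ s ≤ 0 := by
    intro s
    by_contra hpos
    push_neg at hpos
    nlinarith [hEeq s, sq_nonneg (deriv φ s), sq_nonneg (a * φ s),
      mul_pos (mul_pos hpos hpos) hpos]
  intro s0
  by_contra hne
  have hneg : φ s0 < 0 := lt_of_le_of_ne (hφle s0) hne
  have hev : ∀ᶠ x in cocompact ℝ, φ s0 ≤ φ x := by
    rw [cocompact_eq_atBot_atTop, eventually_sup]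
    exact ⟨(h0bot.eventually (eventually_gt_nhds hneg)).mono (fun x hx => hx.le),
           (h0top.eventually (eventually_gt_nhds hneg)).mono (fun x hx => hx.le)⟩
  obtain ⟨x, hx⟩ := (hφ.continuous).exists_forall_le' s0 hev
  have hxneg : φ x < 0 := lt_of_le_of_lt (hx s0) hneg
  have hdx : deriv φ x = 0 := by
    have hmin : IsLocalMin φ x := Filter.Eventually.of_forall (fun y => hx y)
    exact hmin.deriv_eq_zero
  have hxval : 3 * a ^ 2 + 2 * φ x = 0 := by
    have h := hEeq x
    rw [hdx] at h
    have h2 : (φ x) ^ 2 * (3 * a ^ 2 + 2 * φ x) = 0 := by linear_combination h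
    rcases mul_eq_zero.mp h2 with h3 | h3
    · exact absurd (pow_eq_zero_iff (by norm_num)|>.mp h3) hxneg.ne
    · exact h3
  have hd0 : ∀ s, deriv φ s = 0 := by
    intro s
    have h := hEeq s
    have h1 : 0 ≤ 3 * a ^ 2 + 2 * φ s := by
      have := hx s; linarith
    have hle : (deriv φ s) ^ 2 ≤ 0 := by
      nlinarith [mul_nonneg (sq_nonneg (φ s)) h1]
    have h2 : (deriv φ s) ^ 2 = 0 := le_antisymm hle (sq_nonneg _)
    exact pow_eq_zero_iff (by norm_num) |>.mp h2
  have hconstφ := is_const_of_deriv_eq_zero (hφ.differentiable (by norm_num)) hd0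
  have ht : Tendsto (fun _ : ℝ => φ s0) atTop (nhds 0) :=
    h0top.congr (fun t => hconstφ t s0)
  exact hne (tendsto_nhds_unique tendsto_const_nhds ht)
end
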